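/- arXiv:2310.05679 — 2 statements merged into one kernel-verified Lean document; each statement's English description precedes it below -/
import Mathlib

section
/- Let v : ℝ → ℝ be six times continuously differentiable and x₀ ∈ ℝ. For h > 0 define the cell averages v̄_j(h) for j = −2, …, 2 and the Jiang–Shu smoothness indicators β₀(h) and β₂(h) as in the WENO scheme. Then β₀(h) − β₂(h) is O(h⁵) as h → 0⁺; in particular the WENO-Z global smoothness indicator τ₅(h) = |β₀(h) − β₂(h)| is O(h⁵) as h → 0⁺. -/
open Filter Topology Asymptotics

/-- Cell average of `v` over the cell `[x₀+(j-1/2)h, x₀+(j+1/2)h]`. -/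
noncomputable def cellAvg (v : ℝ → ℝ) (x₀ h j : ℝ) : ℝ :=
  (1 / h) * ∫ t in (x₀ + (j - 1 / 2) * h)..(x₀ + (j + 1 / 2) * h), v t

/-- The Jiang–Shu smoothness indicator `β₀`. -/
noncomputable def beta0 (v : ℝ → ℝ) (x₀ h : ℝ) : ℝ :=
  (13 / 12) * (cellAvg v x₀ h (-2) - 2 * cellAvg v x₀ h (-1) + cellAvg v x₀ h 0) ^ 2
    + (1 / 4) * (cellAvg v x₀ h (-2) - 4 * cellAvg v x₀ h (-1) + 3 * cellAvg v x₀ h 0) ^ 2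

/-- The Jiang–Shu smoothness indicator `β₁`. -/
noncomputable def beta1 (v : ℝ → ℝ) (x₀ h : ℝ) : ℝ :=
  (13 / 12) * (cellAvg v x₀ h (-1) - 2 * cellAvg v x₀ h 0 + cellAvg v x₀ h 1) ^ 2
    + (1 / 4) * (cellAvg v x₀ h (-1) - cellAvg v x₀ h 1) ^ 2

/-- The Jiang–Shu smoothness indicator `β₂`. -/
noncomputable def beta2 (v : ℝ → ℝ) (x₀ h : ℝ) : ℝ :=
  (13 / 12) * (cellAvg v x₀ h 0 - 2 * cellAvg v x₀ h 1 + cellAvg v x₀ h 2) ^ 2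
    + (1 / 4) * (3 * cellAvg v x₀ h 0 - 4 * cellAvg v x₀ h 1 + cellAvg v x₀ h 2) ^ 2

/-!
With `V` a primitive of `v`, `h · v̄ⱼ(h) = V(x₀ + (j + ½)h) - V(x₀ + (j - ½)h)`. Hence a stencil
`∑ wᵢ v̄_{jᵢ}` that annihilates the cell averages of all polynomials of degree `< m` is `O(hᵐ)`
for `v ∈ Cᵐ`: expand `V` to order `m + 1`, and every Taylor term but the last cancels.
Factoring the differences of squares,
`β₀ - β₂ = 13/12 (A₀ - A₂)(A₀ + A₂) + 1/4 (B₀ - B₂)(B₀ + B₂)`, where `Aᵢ`, `Bᵢ` are the stencils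
squared in `βᵢ`, and the four factors are stencils of orders `3, 2, 1, 4`.
-/

open Finset
open scoped Nat

theorem contDiff_primitive {v : ℝ → ℝ} {n : ℕ} (hv : ContDiff ℝ n v) (a : ℝ) :
    ContDiff ℝ (n + 1) fun x => ∫ t in a..x, v t := by
  have hderiv : deriv (fun x => ∫ t in a..x, v t) = v :=
    funext (hv.continuous.deriv_integral v a)
  refine contDiff_succ_iff_deriv.mpr
    ⟨intervalIntegral.differentiable_integral_of_continuous hv.continuous, by simp, ?_⟩
  rwa [hderiv]

theorem isBigO_sub_taylor_comp_mul {F : ℝ → ℝ} {n : ℕ} (hF : ContDiff ℝ n F) (x₀ c : ℝ) :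
    (fun h => F (x₀ + c * h) - ∑ k ∈ range (n + 1), iteratedDeriv k F x₀ / k ! * (c * h) ^ k)
      =O[𝓝 0] fun h => h ^ n := by
  have hlim : Tendsto (fun h : ℝ => x₀ + c * h) (𝓝 0) (𝓝 x₀) := by
    simpa using ((continuous_const_mul c).const_add x₀).tendsto 0
  refine (((taylor_isLittleO_univ hF).isBigO.comp_tendsto hlim).trans ?_).congr_left fun h => ?_
  · simpa [Function.comp_def, mul_pow] using
      (isBigO_refl (fun h : ℝ => h ^ n) (𝓝 0)).const_mul_left (c ^ n)
  · simp only [taylor_within_apply, iteratedDerivWithin_univ, smul_eq_mul, Function.comp_apply,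
      add_sub_cancel_left, div_eq_inv_mul, sub_right_inj]
    exact sum_congr rfl fun k _ => by ring

theorem isBigO_div_self_of_isBigO_pow_succ {f : ℝ → ℝ} {m : ℕ}
    (hf : f =O[𝓝 0] fun h => h ^ (m + 1)) : (fun h => f h / h) =O[𝓝[≠] 0] fun h => h ^ m := by
  refine ((hf.mono nhdsWithin_le_nhds).mul (isBigO_refl (fun h : ℝ => h⁻¹) _)).congr'
    (.of_eq (funext fun h => (div_eq_mul_inv _ _).symm)) ?_
  filter_upwards [self_mem_nhdsWithin] with h (hh : h ≠ 0)
  rw [pow_succ, mul_inv_cancel_right₀ hh]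

theorem Asymptotics.IsBigO.mul_pow_add {α 𝕜 : Type*} [NormedField 𝕜] {l : Filter α}
    {f g u : α → 𝕜} {a b : ℕ} (hf : f =O[l] fun x => u x ^ a) (hg : g =O[l] fun x => u x ^ b) :
    (fun x => f x * g x) =O[l] fun x => u x ^ (a + b) :=
  (hf.mul hg).congr_right fun x => (pow_add (u x) a b).symm

theorem cellAvg_eq_sub_div {v : ℝ → ℝ} (hv : Continuous v) (x₀ h j : ℝ) :
    cellAvg v x₀ h j =
      ((∫ t in x₀..x₀ + (j + 1 / 2) * h, v t) - ∫ t in x₀..x₀ + (j - 1 / 2) * h, v t) / h := by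
  rw [intervalIntegral.integral_interval_sub_left (hv.intervalIntegrable _ _)
    (hv.intervalIntegrable _ _), cellAvg, one_div_mul_eq_div]

section Stencil

variable {ι : Type*} [Fintype ι]

/-- `k ∑ᵢ wᵢ ∫_{jᵢ-1/2}^{jᵢ+1/2} t^(k-1) dt`: it vanishes for all `k ≤ m` iff the stencil with
weights `w` on the unit cells centred at the nodes `j` annihilates polynomials of degree `< m`. -/
noncomputable def stencilMoment (w j : ι → ℝ) (k : ℕ) : ℝ :=
  ∑ i, w i * ((j i + 1 / 2) ^ k - (j i - 1 / 2) ^ k)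

theorem stencil_polynomial_eq_sum_moment (w j : ι → ℝ) (a : ℕ → ℝ) (n : ℕ) (h : ℝ) :
    ∑ i, w i * (∑ k ∈ range (n + 1), a k * ((j i + 1 / 2) * h) ^ k
        - ∑ k ∈ range (n + 1), a k * ((j i - 1 / 2) * h) ^ k)
      = ∑ k ∈ range (n + 1), a k * stencilMoment w j k * h ^ k := by
  simp only [stencilMoment, ← sum_sub_distrib, mul_sum, sum_mul]
  rw [sum_comm]
  exact sum_congr rfl fun k _ => sum_congr rfl fun i _ => by rw [mul_pow, mul_pow]; ring

theorem isBigO_stencil_sub {F : ℝ → ℝ} {m : ℕ} (hF : ContDiff ℝ (m + 1) F) (x₀ : ℝ)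
    (w j : ι → ℝ) (hw : ∀ k ≤ m, stencilMoment w j k = 0) :
    (fun h => ∑ i, w i * (F (x₀ + (j i + 1 / 2) * h) - F (x₀ + (j i - 1 / 2) * h)))
      =O[𝓝 0] fun h => h ^ (m + 1) := by
  set a : ℕ → ℝ := fun k => iteratedDeriv k F x₀ / (k ! : ℝ)
  set T : ℝ → ℝ := fun y => ∑ k ∈ range (m + 2), a k * y ^ k
  have hF' : ContDiff ℝ (m + 1 : ℕ) F := by exact_mod_cast hF
  have hrem : (fun h => ∑ i, w i * ((F (x₀ + (j i + 1 / 2) * h) - T ((j i + 1 / 2) * h))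
      - (F (x₀ + (j i - 1 / 2) * h) - T ((j i - 1 / 2) * h)))) =O[𝓝 0] fun h => h ^ (m + 1) :=
    IsBigO.fun_sum fun i _ => ((isBigO_sub_taylor_comp_mul hF' x₀ _).sub
      (isBigO_sub_taylor_comp_mul hF' x₀ _)).const_mul_left (w i)
  have hpoly (h : ℝ) : ∑ i, w i * (T ((j i + 1 / 2) * h) - T ((j i - 1 / 2) * h))
      = a (m + 1) * stencilMoment w j (m + 1) * h ^ (m + 1) := by
    rw [stencil_polynomial_eq_sum_moment, sum_range_succ, sum_eq_zero fun k hk => by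
      rw [hw k (Nat.lt_succ_iff.mp (mem_range.mp hk)), mul_zero, zero_mul], zero_add]
  refine (hrem.add ((isBigO_refl (fun h : ℝ => h ^ (m + 1)) _).const_mul_left
    (a (m + 1) * stencilMoment w j (m + 1)))).congr_left fun h => ?_
  rw [← hpoly, ← sum_add_distrib]
  exact sum_congr rfl fun i _ => by ring

theorem isBigO_stencil_cellAvg {v : ℝ → ℝ} {m : ℕ} (hv : ContDiff ℝ m v) (x₀ : ℝ)
    (w j : ι → ℝ) (hw : ∀ k ≤ m, stencilMoment w j k = 0) :
    (fun h => ∑ i, w i * cellAvg v x₀ h (j i)) =O[𝓝[≠] 0] fun h => h ^ m := by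
  refine (isBigO_div_self_of_isBigO_pow_succ
    (isBigO_stencil_sub (contDiff_primitive hv x₀) x₀ w j hw)).congr_left fun h => ?_
  simp only [cellAvg_eq_sub_div hv.continuous, sum_div, mul_div_assoc]

end Stencil

/-- `β₀(h) − β₂(h) = O(h⁵)` as `h → 0⁺`; in particular the WENO-Z global smoothness
indicator `τ₅(h) = |β₀(h) − β₂(h)|` is `O(h⁵)` as `h → 0⁺`. -/
theorem stmt14 (v : ℝ → ℝ) (hv : ContDiff ℝ 6 v) (x₀ : ℝ) :
    ((fun h : ℝ => beta0 v x₀ h - beta2 v x₀ h) =O[𝓝[>] (0 : ℝ)] (fun h => h ^ 5)) ∧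
    ((fun h : ℝ => |beta0 v x₀ h - beta2 v x₀ h|) =O[𝓝[>] (0 : ℝ)] (fun h => h ^ 5)) := by
  set j : Fin 5 → ℝ := ![-2, -1, 0, 1, 2]
  set stencil : (Fin 5 → ℝ) → ℝ → ℝ := fun w h => ∑ i, w i * cellAvg v x₀ h (j i)
  have hO {m : ℕ} (hm : m ≤ 4) (w : Fin 5 → ℝ) (hw : ∀ k ≤ m, stencilMoment w j k = 0) :
      stencil w =O[𝓝[≠] 0] fun h => h ^ m :=
    isBigO_stencil_cellAvg (hv.of_le (by exact_mod_cast hm.trans (by norm_num))) x₀ w j hw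
  have hD₁ := hO (m := 3) (by norm_num) ![1, -2, 0, 2, -1] fun k hk => by
    interval_cases k <;> norm_num [stencilMoment, Fin.sum_univ_succ, j]
  have hS₁ := hO (m := 2) (by norm_num) ![1, -2, 2, -2, 1] fun k hk => by
    interval_cases k <;> norm_num [stencilMoment, Fin.sum_univ_succ, j]
  have hD₂ := hO (m := 1) (by norm_num) ![1, -4, 0, 4, -1] fun k hk => by
    interval_cases k <;> norm_num [stencilMoment, Fin.sum_univ_succ, j]
  have hS₂ := hO (m := 4) le_rfl ![1, -4, 6, -4, 1] fun k hk => by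
    interval_cases k <;> norm_num [stencilMoment, Fin.sum_univ_succ, j]
  have hdiff : (fun h => beta0 v x₀ h - beta2 v x₀ h) = fun h =>
      13 / 12 * (stencil ![1, -2, 0, 2, -1] h * stencil ![1, -2, 2, -2, 1] h)
        + 1 / 4 * (stencil ![1, -4, 0, 4, -1] h * stencil ![1, -4, 6, -4, 1] h) := by
    ext h
    simp only [beta0, beta2, stencil, j, Fin.sum_univ_succ, Fin.sum_univ_zero,
      Matrix.cons_val_zero, Matrix.cons_val_succ]
    ring
  have h5 : (fun h => beta0 v x₀ h - beta2 v x₀ h) =O[𝓝[≠] 0] fun h => h ^ 5 := by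
    rw [hdiff]
    exact ((hD₁.mul_pow_add hS₁).const_mul_left _).add ((hD₂.mul_pow_add hS₂).const_mul_left _)
  exact ⟨h5.mono (nhdsGT_le_nhdsNE 0), (h5.mono (nhdsGT_le_nhdsNE 0)).abs_left⟩
end

section
/- Let v : ℝ → ℝ be six times continuously differentiable, x₀ ∈ ℝ, and suppose v′(x₀) ≠ 0. Fix real parameters p > 0 and q ≥ 1. For h > 0 define the cell averages v̄_j(h), j = −2, …, 2, the Jiang–Shu smoothness indicators β₀(h), β₁(h), β₂(h), and the WENO-ZL global smoothness indicator τ₅^{ZL}(h) = (1/p)|ln((1 + β₀(h))/(1 + β₂(h)))|. Set d₀ = 1/10, d₁ = 3/5, d₂ = 3/10 and (with ε = 0) define α_s(h) = d_s(1 + (τ₅^{ZL}(h)/β_s(h))^q) and ω_s(h) = α_s(h)/(α₀(h) + α₁(h) + α₂(h)). Then there exists h₀ > 0 such that β_s(h) > 0 for all 0 < h < h₀ and s = 0, 1, 2, and for each s the difference ω_s(h) − d_s is O(h^{3q}) as h → 0⁺. -/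
open Filter Topology Asymptotics

/-- The vector of Jiang–Shu smoothness indicators. -/
noncomputable def betaV (v : ℝ → ℝ) (x₀ h : ℝ) : Fin 3 → ℝ :=
  ![beta0 v x₀ h, beta1 v x₀ h, beta2 v x₀ h]

/-- The linear weights of the fifth-order WENO reconstruction at the right cell boundary. -/
noncomputable def dLin : Fin 3 → ℝ := ![1 / 10, 3 / 5, 3 / 10]

/-- The WENO-ZL global smoothness indicator `τ₅^{ZL} = (1/p)|ln((1+β₀)/(1+β₂))|`. -/
noncomputable def tauZL (v : ℝ → ℝ) (x₀ p h : ℝ) : ℝ :=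
  (1 / p) * |Real.log ((1 + beta0 v x₀ h) / (1 + beta2 v x₀ h))|

/-!
If `V` is a primitive of `v`, the cell average `v̄_j(h)` is the difference quotient
`(V(x₀ + (j + 1/2)h) - V(x₀ + (j - 1/2)h)) / h`, so Taylor's theorem for `V` expands it
in powers of `h` up to `O(h⁴)`. In `β_s = 13/12 A_s² + 1/4 B_s²` one has
`B_s = ±2 v'(x₀) h + O(h³)`, so `β_s ≥ v'(x₀)² h² / 4` for small `h`, while the leading parts
of `β₀` and `β₂` agree up to `h⁵`. As `log` is `1`-Lipschitz on `[1, ∞)`,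
`τ ≤ |β₀ - β₂| / p = O(h⁵)`, hence `(τ / β_s)^q = O(h^{3q})`, and a normalised weight
`d_s (1 + θ_s) / ∑ d_r (1 + θ_r)` differs from `d_s` by at most `d_s · max_r θ_r`.
-/

open Set
open scoped Nat

theorem isBigO_pow_pow_of_le {𝕜 : Type*} [NormedField 𝕜] {l : Filter 𝕜} (hl : l ≤ 𝓝 0)
    {m n : ℕ} (h : m ≤ n) : (fun x : 𝕜 => x ^ n) =O[l] fun x => x ^ m := by
  rcases h.eq_or_lt with rfl | h
  exacts [isBigO_refl _ _, (isLittleO_pow_pow h).isBigO.mono hl]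

theorem Asymptotics.IsBigO.sq_sub_sq {α : Type*} {l : Filter α} {X L g k : α → ℝ}
    (hX : (fun x => X x - L x) =O[l] g) (hL : L =O[l] k) (hg : g =O[l] k) :
    (fun x => X x ^ 2 - L x ^ 2) =O[l] fun x => g x * k x :=
  (hX.mul ((hX.trans hg).add (hL.const_mul_left 2))).congr_left fun x => by ring

theorem contDiff_succ_primitive {v : ℝ → ℝ} {n : ℕ} (hv : ContDiff ℝ n v) (a : ℝ) :
    ContDiff ℝ (n + 1 : ℕ) fun x => ∫ t in a..x, v t := by
  rw [Nat.cast_add, Nat.cast_one, contDiff_succ_iff_deriv]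
  refine ⟨fun x => (hv.continuous.integral_hasStrictDerivAt a x).hasDerivAt.differentiableAt,
    by simp, ?_⟩
  rwa [funext (Continuous.deriv_integral v hv.continuous a)]

theorem isLittleO_taylor_comp_mul {V : ℝ → ℝ} {n : ℕ} (hV : ContDiff ℝ n V) (x₀ c : ℝ) :
    (fun h => V (x₀ + c * h) - taylorWithinEval V n univ x₀ (x₀ + c * h))
      =o[𝓝 0] fun h => h ^ n := by
  have hc : Tendsto (fun h : ℝ => x₀ + c * h) (𝓝 0) (𝓝 x₀) :=
    (by fun_prop : Continuous fun h : ℝ => x₀ + c * h).tendsto' 0 x₀ (by simp)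
  refine ((taylor_isLittleO_univ hV).comp_tendsto hc).trans_isBigO ?_
  simpa only [Function.comp_def, add_sub_cancel_left, mul_pow] using
    isBigO_const_mul_self (c ^ n) (fun h : ℝ => h ^ n) (𝓝 0)

theorem taylorWithinEval_primitive_sub {v : ℝ → ℝ} (hv : Continuous v) (n : ℕ)
    (x₀ a b h : ℝ) :
    taylorWithinEval (fun x => ∫ t in x₀..x, v t) (n + 1) univ x₀ (x₀ + b * h)
      - taylorWithinEval (fun x => ∫ t in x₀..x, v t) (n + 1) univ x₀ (x₀ + a * h)
      = h * ∑ k ∈ Finset.range (n + 1),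
          iteratedDeriv k v x₀ * (b ^ (k + 1) - a ^ (k + 1)) / (k + 1)! * h ^ k := by
  have hD (k : ℕ) : iteratedDeriv (k + 1) (fun x => ∫ t in x₀..x, v t) = iteratedDeriv k v := by
    rw [iteratedDeriv_succ', funext (Continuous.deriv_integral v hv x₀)]
  rw [taylor_within_apply, taylor_within_apply, ← Finset.sum_sub_distrib,
    Finset.sum_range_succ', Finset.mul_sum]
  simp only [iteratedDerivWithin_univ, hD, smul_eq_mul, pow_zero, sub_self, add_zero]
  exact Finset.sum_congr rfl fun k _ => by ring

theorem cellAvg_sub_taylor_isLittleO {v : ℝ → ℝ} {n : ℕ} (hv : ContDiff ℝ n v) (x₀ j : ℝ) :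
    (fun h => cellAvg v x₀ h j - ∑ k ∈ Finset.range (n + 1),
        iteratedDeriv k v x₀ * ((j + 1 / 2) ^ (k + 1) - (j - 1 / 2) ^ (k + 1)) / (k + 1)!
          * h ^ k) =o[𝓝[≠] 0] fun h => h ^ n := by
  have hV := contDiff_succ_primitive hv x₀
  have hR := ((isLittleO_taylor_comp_mul hV x₀ (j + 1 / 2)).sub
    (isLittleO_taylor_comp_mul hV x₀ (j - 1 / 2))).mono (nhdsWithin_le_nhds (s := {0}ᶜ))
  refine ((hR.mul_isBigO (isBigO_refl (fun h : ℝ => h⁻¹) _)).congr' ?_ ?_)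
  · filter_upwards [self_mem_nhdsWithin] with h (hh : h ≠ 0)
    have hcell : cellAvg v x₀ h j = ((∫ t in x₀..x₀ + (j + 1 / 2) * h, v t)
        - ∫ t in x₀..x₀ + (j - 1 / 2) * h, v t) * h⁻¹ := by
      rw [intervalIntegral.integral_interval_sub_left (hv.continuous.intervalIntegrable _ _)
        (hv.continuous.intervalIntegrable _ _), cellAvg]
      ring_nf
    have hT := taylorWithinEval_primitive_sub hv.continuous n x₀ (j - 1 / 2) (j + 1 / 2) h
    have hS := congrArg (· * h⁻¹) hT
    simp only [mul_comm h, mul_inv_cancel_right₀ hh] at hS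
    rw [hcell, ← hS]
    ring
  · filter_upwards [self_mem_nhdsWithin] with h (hh : h ≠ 0)
    field_simp
    ring

theorem cellAvg_sub_cubic_isBigO {v : ℝ → ℝ} (hv : ContDiff ℝ 4 v) (x₀ j : ℝ) :
    (fun h => cellAvg v x₀ h j - (v x₀ + deriv v x₀ * j * h
        + iteratedDeriv 2 v x₀ * (j ^ 2 / 2 + 1 / 24) * h ^ 2
        + iteratedDeriv 3 v x₀ * (j ^ 3 / 6 + j / 24) * h ^ 3)) =O[𝓝[>] 0] fun h => h ^ 4 := by
  have hquartic := (isBigO_refl (fun h : ℝ => h ^ 4) (𝓝[>] 0)).const_mul_left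
    (iteratedDeriv 4 v x₀ * ((j + 1 / 2) ^ 5 - (j - 1 / 2) ^ 5) / 5!)
  refine (((cellAvg_sub_taylor_isLittleO (n := 4) hv x₀ j).isBigO.mono
    (nhdsGT_le_nhdsNE 0)).add hquartic).congr_left fun h => ?_
  simp only [Finset.sum_range_succ, Finset.range_zero, Finset.sum_empty, iteratedDeriv_zero,
    iteratedDeriv_one, Nat.factorial]
  push_cast
  ring

-- `beta0`, `beta1`, `beta2` are `jiangShuForm A B` for their two stencil combinations `A`, `B`.
noncomputable def jiangShuForm (a b : ℝ) : ℝ := 13 / 12 * a ^ 2 + 1 / 4 * b ^ 2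

theorem isBigO_jiangShuForm_sub {A B : ℝ → ℝ} {a₂ a₃ b₁ b₃ : ℝ}
    (hA : (fun h => A h - (a₂ * h ^ 2 + a₃ * h ^ 3)) =O[𝓝[>] 0] fun h => h ^ 4)
    (hB : (fun h => B h - (b₁ * h + b₃ * h ^ 3)) =O[𝓝[>] 0] fun h => h ^ 4) :
    (fun h => jiangShuForm (A h) (B h)
      - jiangShuForm (a₂ * h ^ 2 + a₃ * h ^ 3) (b₁ * h + b₃ * h ^ 3))
      =O[𝓝[>] 0] fun h => h ^ 5 := by
  have hpow {m n : ℕ} (hmn : m ≤ n) :=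
    isBigO_pow_pow_of_le (l := 𝓝[>] (0 : ℝ)) nhdsWithin_le_nhds hmn
  have hA2 := hA.sq_sub_sq (k := fun h => h ^ 2)
    (((hpow le_rfl).const_mul_left a₂).add ((hpow (by norm_num)).const_mul_left a₃))
    (hpow (by norm_num))
  have hB2 := hB.sq_sub_sq (k := fun h => h ^ 1)
    ((((hpow le_rfl).const_mul_left b₁).add
      ((hpow (n := 3) (by norm_num)).const_mul_left b₃)).congr_left fun h => by ring)
    (hpow (by norm_num))
  refine (((hA2.trans ?_).const_mul_left (13 / 12)).add
    ((hB2.trans ?_).const_mul_left (1 / 4))).congr_left fun h => by simp only [jiangShuForm]; ring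
  · exact (hpow (by norm_num : 5 ≤ 6)).congr_left fun h => by ring
  · exact (hpow le_rfl).congr_left fun h => by ring

theorem eventually_le_jiangShuForm {B : ℝ → ℝ} {b₁ b₃ : ℝ} (hb : b₁ ≠ 0) (A : ℝ → ℝ)
    (hB : (fun h => B h - (b₁ * h + b₃ * h ^ 3)) =O[𝓝[>] 0] fun h => h ^ 4) :
    ∀ᶠ h in 𝓝[>] 0, b₁ ^ 2 / 16 * h ^ 2 ≤ jiangShuForm (A h) (B h) := by
  have hpow {m n : ℕ} (hmn : m ≤ n) :=
    isBigO_pow_pow_of_le (l := 𝓝[>] (0 : ℝ)) nhdsWithin_le_nhds hmn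
  have hlin : (fun h => B h - b₁ * h) =o[𝓝[>] 0] fun h => h ^ 1 :=
    (((hB.trans (hpow (by norm_num : 3 ≤ 4))).add ((hpow le_rfl).const_mul_left b₃)).congr_left
      fun h => by ring).trans_isLittleO ((isLittleO_pow_pow (by norm_num)).mono nhdsWithin_le_nhds)
  filter_upwards [hlin.def (half_pos (abs_pos.mpr hb))] with h hh
  simp only [Real.norm_eq_abs, pow_one] at hh
  have hBh : |b₁ * h| / 2 ≤ |B h| := by
    linarith [abs_sub_abs_le_abs_sub (b₁ * h) (B h), abs_sub_comm (B h) (b₁ * h), abs_mul b₁ h]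
  have := pow_le_pow_left₀ (by positivity) hBh 2
  simp only [jiangShuForm, div_pow, sq_abs, mul_pow] at this ⊢
  nlinarith [sq_nonneg (A h)]

theorem beta_asymptotics {v : ℝ → ℝ} (hv : ContDiff ℝ 4 v) {x₀ : ℝ} (hx : deriv v x₀ ≠ 0) :
    (fun h => beta0 v x₀ h - beta2 v x₀ h) =O[𝓝[>] 0] (fun h => h ^ 5) ∧
      ∀ᶠ h in 𝓝[>] 0, ∀ s, deriv v x₀ ^ 2 / 4 * h ^ 2 ≤ betaV v x₀ h s := by
  have hc := cellAvg_sub_cubic_isBigO hv x₀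
  set u₁ := deriv v x₀
  set u₂ := iteratedDeriv 2 v x₀
  set u₃ := iteratedDeriv 3 v x₀
  have hA₀ : (fun h => (cellAvg v x₀ h (-2) - 2 * cellAvg v x₀ h (-1) + cellAvg v x₀ h 0)
      - (u₂ * h ^ 2 + -u₃ * h ^ 3)) =O[𝓝[>] 0] fun h => h ^ 4 :=
    (((hc (-2)).sub ((hc (-1)).const_mul_left 2)).add (hc 0)).congr_left fun h => by ring
  have hB₀ : (fun h => (cellAvg v x₀ h (-2) - 4 * cellAvg v x₀ h (-1) + 3 * cellAvg v x₀ h 0)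
      - (2 * u₁ * h + -(7 / 12 * u₃) * h ^ 3)) =O[𝓝[>] 0] fun h => h ^ 4 :=
    (((hc (-2)).sub ((hc (-1)).const_mul_left 4)).add ((hc 0).const_mul_left 3)).congr_left
      fun h => by ring
  have hB₁ : (fun h => (cellAvg v x₀ h (-1) - cellAvg v x₀ h 1)
      - (-2 * u₁ * h + -(5 / 12 * u₃) * h ^ 3)) =O[𝓝[>] 0] fun h => h ^ 4 :=
    ((hc (-1)).sub (hc 1)).congr_left fun h => by ring
  have hA₂ : (fun h => (cellAvg v x₀ h 0 - 2 * cellAvg v x₀ h 1 + cellAvg v x₀ h 2)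
      - (u₂ * h ^ 2 + u₃ * h ^ 3)) =O[𝓝[>] 0] fun h => h ^ 4 :=
    (((hc 0).sub ((hc 1).const_mul_left 2)).add (hc 2)).congr_left fun h => by ring
  have hB₂ : (fun h => (3 * cellAvg v x₀ h 0 - 4 * cellAvg v x₀ h 1 + cellAvg v x₀ h 2)
      - (-2 * u₁ * h + 7 / 12 * u₃ * h ^ 3)) =O[𝓝[>] 0] fun h => h ^ 4 :=
    ((((hc 0).const_mul_left 3).sub ((hc 1).const_mul_left 4)).add (hc 2)).congr_left
      fun h => by ring
  refine ⟨?_, ?_⟩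
  · -- `B₂ ≈ -B₀` and `A₀, A₂` differ only in the sign of `u₃ h³`: the leading forms differ by
    -- `-13/3 u₂ u₃ h⁵`.
    refine (((isBigO_jiangShuForm_sub hA₀ hB₀).sub (isBigO_jiangShuForm_sub hA₂ hB₂)).add
      ((isBigO_refl _ _).const_mul_left (-13 / 3 * u₂ * u₃))).congr_left fun h => ?_
    simp only [beta0, beta2, jiangShuForm]
    ring
  · have h2u : 2 * u₁ ≠ 0 := mul_ne_zero two_ne_zero hx
    have hu (h : ℝ) : u₁ ^ 2 / 4 * h ^ 2 = (2 * u₁) ^ 2 / 16 * h ^ 2 := by ring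
    have hu' (h : ℝ) : u₁ ^ 2 / 4 * h ^ 2 = (-2 * u₁) ^ 2 / 16 * h ^ 2 := by ring
    filter_upwards [eventually_le_jiangShuForm h2u _ hB₀,
      eventually_le_jiangShuForm (by simpa using h2u) _ hB₁,
      eventually_le_jiangShuForm (by simpa using h2u) _ hB₂] with h h₀ h₁ h₂ s
    fin_cases s
    exacts [(hu h).trans_le h₀, (hu' h).trans_le h₁, (hu' h).trans_le h₂]

theorem abs_log_div_le_abs_sub {x y : ℝ} (hx : 1 ≤ x) (hy : 1 ≤ y) :
    |Real.log (x / y)| ≤ |x - y| := by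
  have hxy : 0 < x / y := by positivity
  rw [abs_le]
  constructor
  · calc -|x - y| ≤ (x - y) / x := by
          rw [le_div_iff₀ (by linarith)]
          nlinarith [neg_abs_le (x - y), abs_nonneg (x - y)]
      _ = 1 - (x / y)⁻¹ := by field_simp
      _ ≤ Real.log (x / y) := Real.one_sub_inv_le_log_of_pos hxy
  · calc Real.log (x / y) ≤ x / y - 1 := Real.log_le_sub_one_of_pos hxy
      _ = (x - y) / y := by field_simp
      _ ≤ |x - y| := by
          rw [div_le_iff₀ (by linarith)]
          nlinarith [le_abs_self (x - y), abs_nonneg (x - y)]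

theorem tauZL_le_abs_beta0_sub_beta2_div (v : ℝ → ℝ) (x₀ h : ℝ) {p : ℝ} (hp : 0 < p) :
    tauZL v x₀ p h ≤ |beta0 v x₀ h - beta2 v x₀ h| / p := by
  have h₀ : 0 ≤ beta0 v x₀ h := by unfold beta0; positivity
  have h₂ : 0 ≤ beta2 v x₀ h := by unfold beta2; positivity
  calc tauZL v x₀ p h ≤ 1 / p * |(1 + beta0 v x₀ h) - (1 + beta2 v x₀ h)| :=
        mul_le_mul_of_nonneg_left (abs_log_div_le_abs_sub (by linarith) (by linarith))
          (by positivity)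
    _ = |beta0 v x₀ h - beta2 v x₀ h| / p := by rw [add_sub_add_left_eq_sub]; ring

theorem exists_tauZL_div_betaV_le {v : ℝ → ℝ} (hv : ContDiff ℝ 4 v) {x₀ : ℝ}
    (hx : deriv v x₀ ≠ 0) {p : ℝ} (hp : 0 < p) :
    ∃ K, 0 ≤ K ∧ ∀ᶠ h in 𝓝[>] 0, ∀ s, 0 ≤ tauZL v x₀ p h / betaV v x₀ h s ∧
      tauZL v x₀ p h / betaV v x₀ h s ≤ K * h ^ 3 := by
  obtain ⟨hdiff, hβ⟩ := beta_asymptotics hv hx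
  obtain ⟨C, hC⟩ := hdiff.bound
  set c := deriv v x₀ ^ 2 / 4
  have hc : 0 < c := by positivity
  refine ⟨|C| / p / c, by positivity, ?_⟩
  filter_upwards [hC, hβ, self_mem_nhdsWithin] with h hCh hβh (hh : 0 < h) s
  have hβs : 0 < betaV v x₀ h s := (by positivity : 0 < c * h ^ 2).trans_le (hβh s)
  have hτ : 0 ≤ tauZL v x₀ p h := by unfold tauZL; positivity
  have hdiff_le : |beta0 v x₀ h - beta2 v x₀ h| ≤ |C| * h ^ 5 := by
    rw [Real.norm_eq_abs, Real.norm_eq_abs, abs_of_pos (by positivity : 0 < h ^ 5)] at hCh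
    exact hCh.trans (mul_le_mul_of_nonneg_right (le_abs_self C) (by positivity))
  refine ⟨div_nonneg hτ hβs.le, ?_⟩
  calc tauZL v x₀ p h / betaV v x₀ h s ≤ |C| * h ^ 5 / p / (c * h ^ 2) :=
        div_le_div₀ (by positivity)
          ((tauZL_le_abs_beta0_sub_beta2_div v x₀ h hp).trans (by gcongr)) (by positivity) (hβh s)
    _ = |C| / p / c * h ^ 3 := by field_simp

theorem abs_weight_sub_le {ι : Type*} [Fintype ι] {d t : ι → ℝ} {M : ℝ} (hd : ∀ r, 0 ≤ d r)
    (hsum : ∑ r, d r = 1) (ht : ∀ r, 0 ≤ t r ∧ t r ≤ M) (s : ι) :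
    |d s * (1 + t s) / ∑ r, d r * (1 + t r) - d s| ≤ d s * M := by
  set S := ∑ r, d r * t r
  have hT : ∑ r, d r * (1 + t r) = 1 + S := by
    simp only [mul_one_add, Finset.sum_add_distrib, hsum, S]
  have hS₀ : 0 ≤ S := Finset.sum_nonneg fun r _ => mul_nonneg (hd r) (ht r).1
  have hSM : S ≤ M := calc
    S ≤ ∑ r, d r * M := Finset.sum_le_sum fun r _ => mul_le_mul_of_nonneg_left (ht r).2 (hd r)
    _ = M := by rw [← Finset.sum_mul, hsum, one_mul]
  have hdiff : |t s - S| ≤ M := abs_sub_le_of_nonneg_of_le (ht s).1 (ht s).2 hS₀ hSM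
  rw [hT, show d s * (1 + t s) / (1 + S) - d s = d s * ((t s - S) / (1 + S)) by field_simp; ring,
    abs_mul, abs_of_nonneg (hd s), abs_div, abs_of_pos (by linarith : 0 < 1 + S)]
  exact mul_le_mul_of_nonneg_left
    ((div_le_self (abs_nonneg _) (by linarith : 1 ≤ 1 + S)).trans hdiff) (hd s)

theorem isBigO_weight_sub {α ι : Type*} [Fintype ι] {l : Filter α} {d : ι → ℝ}
    (hd : ∀ r, 0 ≤ d r) (hsum : ∑ r, d r = 1) {θ : ι → α → ℝ} {g : α → ℝ}
    (hθ : ∀ᶠ x in l, ∀ r, 0 ≤ θ r x ∧ θ r x ≤ g x) (s : ι) :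
    (fun x => d s * (1 + θ s x) / ∑ r, d r * (1 + θ r x) - d s) =O[l] g :=
  IsBigO.of_bound (d s) <| hθ.mono fun x hx => by
    rw [Real.norm_eq_abs, Real.norm_eq_abs]
    exact (abs_weight_sub_le hd hsum hx s).trans
      (mul_le_mul_of_nonneg_left (le_abs_self _) (hd s))

/-- At a non-critical point (`v′(x₀) ≠ 0`) of a `C⁶` function, the smoothness indicators are
eventually positive and the WENO-ZL nonlinear weights (with tuners `p > 0`, `q ≥ 1` and
`ε = 0`) satisfy `ω_s − d_s = O(h^{3q})` as `h → 0⁺`. -/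
theorem stmt17 (v : ℝ → ℝ) (hv : ContDiff ℝ 6 v) (x₀ : ℝ) (hx : deriv v x₀ ≠ 0)
    (p q : ℝ) (hp : 0 < p) (hq : 1 ≤ q) :
    ∃ h₀ : ℝ, 0 < h₀ ∧
      (∀ h : ℝ, 0 < h → h < h₀ → ∀ s : Fin 3, 0 < betaV v x₀ h s) ∧
      (∀ s : Fin 3,
        (fun h : ℝ =>
            (dLin s * (1 + (tauZL v x₀ p h / betaV v x₀ h s) ^ q))
              / (∑ r : Fin 3, dLin r * (1 + (tauZL v x₀ p h / betaV v x₀ h r) ^ q)) - dLin s)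
          =O[𝓝[>] (0 : ℝ)] (fun h => h ^ (3 * q))) := by
  have hv₄ : ContDiff ℝ 4 v := hv.of_le (by norm_num)
  obtain ⟨K, hK, hθ⟩ := exists_tauZL_div_betaV_le hv₄ hx hp
  obtain ⟨h₀, h₀_pos, hβ⟩ := (nhdsGT_basis 0).eventually_iff.mp (beta_asymptotics hv₄ hx).2
  refine ⟨h₀, h₀_pos, fun h h_pos hh s => ?_, fun s => ?_⟩
  · exact (by positivity : 0 < deriv v x₀ ^ 2 / 4 * h ^ 2).trans_le (hβ ⟨h_pos, hh⟩ s)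
  have hθq : ∀ᶠ h in 𝓝[>] 0, ∀ r, 0 ≤ (tauZL v x₀ p h / betaV v x₀ h r) ^ q ∧
      (tauZL v x₀ p h / betaV v x₀ h r) ^ q ≤ K ^ q * h ^ (3 * q) := by
    filter_upwards [hθ, self_mem_nhdsWithin] with h hθh (hh : 0 < h) r
    refine ⟨Real.rpow_nonneg (hθh r).1 q, ?_⟩
    calc _ ≤ (K * h ^ 3) ^ q := Real.rpow_le_rpow (hθh r).1 (hθh r).2 (by linarith)
      _ = K ^ q * h ^ (3 * q) := by
        rw [Real.mul_rpow hK (by positivity), ← Real.rpow_natCast, ← Real.rpow_mul hh.le]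
        norm_num
  have hd : ∀ r, 0 ≤ dLin r := fun r => by fin_cases r <;> norm_num [dLin]
  have hsum : ∑ r, dLin r = 1 := by simp [Fin.sum_univ_three, dLin]; norm_num
  exact (isBigO_weight_sub hd hsum hθq s).trans (isBigO_const_mul_self _ _ _)
end
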